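/- Let G be a finite p-group acting faithfully on a homogeneous G-lattice M such that H²(C, M|_C) ≠ 0 for every subgroup C of G of order p. Then G is trivial. -/

import Mathlib

open scoped TensorProduct

/-- Extension of scalars of an integral representation. -/
noncomputable def extScalars (A : Type*) [CommRing A] {G M : Type*} [Group G]
    [AddCommGroup M] [Module ℤ M] (ρ : Representation ℤ G M) :
    Representation A G (A ⊗[ℤ] M) :=
  (((Module.End.baseChangeHom ℤ A M : Module.End ℤ M →+* Module.End A (A ⊗[ℤ] M)) :
    Module.End ℤ M →* Module.End A (A ⊗[ℤ] M))).comp ρ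

/-- A `G`-stable submodule of a representation. -/
def StableSub {k G V : Type*} [CommRing k] [Group G] [AddCommGroup V] [Module k V]
    (σ : Representation k G V) (W : Submodule k V) : Prop :=
  ∀ (g : G) (x : V), x ∈ W → σ g x ∈ W

/-- `W` is an irreducible subrepresentation. -/
def IsSimpleSub {k G V : Type*} [CommRing k] [Group G] [AddCommGroup V] [Module k V]
    (σ : Representation k G V) (W : Submodule k V) : Prop :=
  W ≠ ⊥ ∧ StableSub σ W ∧ ∀ W' ≤ W, StableSub σ W' → W' = ⊥ ∨ W' = W

/-- `M` is a homogeneous `G`-lattice. -/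
def Homogeneous {G M : Type*} [Group G] [AddCommGroup M] [Module ℤ M]
    (ρ : Representation ℤ G M) : Prop :=
  ∀ (W₁ W₂ : Submodule ℚ (ℚ ⊗[ℤ] M))
    (h₁ : IsSimpleSub (extScalars ℚ ρ) W₁) (_h₂ : IsSimpleSub (extScalars ℚ ρ) W₂),
    ∃ e : W₁ ≃ₗ[ℚ] W₂, ∀ (g : G) (x : ℚ ⊗[ℤ] M) (hx : x ∈ W₁),
      (e ⟨extScalars ℚ ρ g x, h₁.2.1 g x hx⟩ : ℚ ⊗[ℤ] M) =
        extScalars ℚ ρ g (e ⟨x, hx⟩ : W₂)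

/-!
A nontrivial finite `p`-group has a central element `c` of order `p`. For `C = ⟨c⟩` cyclic,
`H²(C, M) ≅ M^C / N M` with `N` the norm, so `H²(C, M) ≠ 0` forces `c` to fix a nonzero vector
of `M`. On `V = ℚ ⊗ M` the norm `N = 1 + c + ⋯ + c^(p-1)` kills the image of `c - 1`, and since
`c` is central both `ker (c - 1)` and `ker N` are `G`-stable. If `c` acted nontrivially on `V`,
both would be nonzero and would contain simple subrepresentations, isomorphic by homogeneity;
but `c` fixes the first pointwise, while `N` acts as `p` on the fixed vectors of the second.
So `c` acts trivially on `V`, hence on `M`, contradicting faithfulness.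
-/

universe u

theorem groupCohomology.subsingleton_H2_of_forall_mem_zpowers {k G : Type u} [CommRing k]
    [CommGroup G] [Fintype G] (A : Rep k G) (g : G) (hg : ∀ x, x ∈ Subgroup.zpowers g)
    (hA : ∀ x : A, A.ρ g x = x → x = 0) : Subsingleton (H2 A) := by
  let S := Rep.FiniteCyclicGroup.normHomCompSub A g
  have : Subsingleton (LinearMap.ker S.g.hom) := subsingleton_of_forall_eq 0 fun x =>
    Subtype.ext (hA x (sub_eq_zero.1 (by simpa [S, Rep.sub_hom] using x.2)))
  have : Subsingleton S.cycles :=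
    @Equiv.subsingleton _ _ S.moduleCatCyclesIso.toLinearEquiv.toEquiv this
  have : Subsingleton S.homology :=
    ((ModuleCat.epi_iff_surjective S.homologyπ).1 inferInstance).subsingleton
  exact (Rep.FiniteCyclicGroup.groupCohomologyIsoEven A g hg 2 even_two).toLinearEquiv.toEquiv
    |>.subsingleton

open scoped IsMulCommutative in
theorem groupCohomology.subsingleton_H2_zpowers {k G V : Type u} [CommRing k] [Group G]
    [Finite G] [AddCommGroup V] [Module k V] (ρ : Representation k G V) (c : G)
    (hc : ∀ x, ρ c x = x → x = 0) :
    Subsingleton (H2 (Rep.of (ρ.comp (Subgroup.zpowers c).subtype))) :=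
  have := Fintype.ofFinite (Subgroup.zpowers c)
  subsingleton_H2_of_forall_mem_zpowers _ ⟨c, Subgroup.mem_zpowers c⟩
    (fun ⟨_, n, hn⟩ => ⟨n, Subtype.ext (by simpa using hn)⟩) hc

theorem IsPGroup.exists_mem_center_orderOf_eq {p : ℕ} [Fact p.Prime] {G : Type*} [Group G]
    [Finite G] [Nontrivial G] (hG : IsPGroup p G) : ∃ c ∈ Subgroup.center G, orderOf c = p := by
  have := hG.center_nontrivial
  obtain ⟨n, hn, hcard⟩ := (hG.to_subgroup _).nontrivial_iff_card.1 this
  obtain ⟨z, hz⟩ := exists_prime_orderOf_dvd_card' p (hcard ▸ dvd_pow_self p hn.ne')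
  exact ⟨z, z.2, by rwa [Subgroup.orderOf_coe]⟩

section StableSub

variable {k G V : Type*} [CommRing k] [Group G] [AddCommGroup V] [Module k V]
  {σ : Representation k G V}

theorem StableSub.ker {f : Module.End k V} (hf : ∀ g, Commute f (σ g)) :
    StableSub σ (LinearMap.ker f) := fun g x hx => by
  rw [LinearMap.mem_ker] at hx ⊢
  rw [← Module.End.mul_apply, (hf g).eq, Module.End.mul_apply, hx, map_zero]

theorem StableSub.exists_isSimpleSub_le [IsArtinian k V] {W : Submodule k V}
    (hst : StableSub σ W) (hW : W ≠ ⊥) : ∃ W' ≤ W, IsSimpleSub σ W' := by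
  obtain ⟨W', ⟨hle, hne, hst'⟩, hmin⟩ := wellFounded_lt.has_min
    {W' | W' ≤ W ∧ W' ≠ ⊥ ∧ StableSub σ W'} ⟨W, le_rfl, hW, hst⟩
  refine ⟨W', hle, hne, hst', fun W'' hle' hst'' => ?_⟩
  by_contra! h
  exact hmin W'' ⟨hle'.trans hle, h.1, hst''⟩ (lt_of_le_of_ne hle' h.2)

end StableSub

section Homogeneous

variable {G M : Type*} [Group G] [AddCommGroup M] [Module ℤ M] {ρ : Representation ℤ G M}

theorem extScalars_injective (A : Type*) [CommRing A] [FaithfulSMul ℤ A] [Module.Flat ℤ M]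
    (hρ : Function.Injective ρ) : Function.Injective (extScalars A ρ) :=
  (LinearMap.baseChangeHom_injective ℤ M A).comp hρ

theorem Homogeneous.forall_fixed_of_isSimpleSub (hρ : Homogeneous ρ)
    {W₁ W₂ : Submodule ℚ (ℚ ⊗[ℤ] M)} (h₁ : IsSimpleSub (extScalars ℚ ρ) W₁)
    (h₂ : IsSimpleSub (extScalars ℚ ρ) W₂) {g : G} (hg : ∀ x ∈ W₁, extScalars ℚ ρ g x = x) :
    ∀ y ∈ W₂, extScalars ℚ ρ g y = y := by
  obtain ⟨e, he⟩ := hρ W₁ W₂ h₁ h₂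
  intro y hy
  obtain ⟨⟨x, hx⟩, hxy⟩ := e.surjective ⟨y, hy⟩
  obtain rfl : (e ⟨x, hx⟩ : ℚ ⊗[ℤ] M) = y := congrArg Subtype.val hxy
  rw [← he g x hx]
  exact congrArg (fun z => (e z : ℚ ⊗[ℤ] M)) (Subtype.ext (hg x hx))

theorem Homogeneous.extScalars_eq_one [Module.Finite ℤ M] (hρ : Homogeneous ρ) {n : ℕ}
    (hn : n ≠ 0) {c : G} (hc : c ∈ Subgroup.center G) (hcn : c ^ n = 1)
    {v : ℚ ⊗[ℤ] M} (hv : v ≠ 0) (hcv : extScalars ℚ ρ c v = v) : extScalars ℚ ρ c = 1 := by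
  set T := extScalars ℚ ρ c
  set N := ∑ i ∈ Finset.range n, T ^ i
  have hT : ∀ g, Commute T (extScalars ℚ ρ g) := fun g => by
    simp only [T, Commute, SemiconjBy, ← map_mul, Subgroup.mem_center_iff.1 hc g]
  have hNT : N * (T - 1) = 0 := by rw [geom_sum_mul, ← map_pow, hcn, map_one, sub_self]
  by_contra hT1
  have hN : LinearMap.ker N ≠ ⊥ := fun h => hT1 <| sub_eq_zero.1 <| LinearMap.ext fun w =>
    LinearMap.ker_eq_bot.1 h <| by
      rw [LinearMap.zero_apply, map_zero, ← Module.End.mul_apply, hNT, LinearMap.zero_apply]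
  obtain ⟨W₁, hW₁, h₁⟩ :=
    (StableSub.ker fun g => (hT g).sub_left (Commute.one_left _)).exists_isSimpleSub_le
      (Submodule.ne_bot_iff _ |>.2 ⟨v, by simp [hcv], hv⟩)
  obtain ⟨W₂, hW₂, h₂⟩ := (StableSub.ker fun g =>
    Commute.sum_left _ _ _ fun i _ => (hT g).pow_left i).exists_isSimpleSub_le hN
  obtain ⟨y, hy, hy0⟩ := Submodule.exists_mem_ne_zero_of_ne_bot h₂.1
  have hTy : T y = y :=
    hρ.forall_fixed_of_isSimpleSub h₁ h₂ (fun x hx => sub_eq_zero.1 (hW₁ hx)) y hy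
  have hNy : N y = (n : ℚ) • y := by
    have hTiy : ∀ i, (T ^ i) y = y := fun i => by
      rw [Module.End.pow_apply]; exact Function.IsFixedPt.iterate hTy i
    simp [N, LinearMap.sum_apply, hTiy, Nat.cast_smul_eq_nsmul]
  have hNy0 : N y = 0 := hW₂ hy
  rw [hNy] at hNy0
  exact hy0 ((smul_eq_zero.1 hNy0).resolve_left (Nat.cast_ne_zero.2 hn))

end Homogeneous

/-- Let `G` be a finite `p`-group acting faithfully on a homogeneous
`G`-lattice `M` such that `H²(C, M|_C) ≠ 0` for every subgroup `C` of `G` of order `p`.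
Then `G` is trivial. -/
theorem stmt_10 {p : ℕ} (hp : p.Prime) {G M : Type} [Group G] [Finite G]
    (hpG : IsPGroup p G) [AddCommGroup M] [Module ℤ M]
    [Module.Free ℤ M] [Module.Finite ℤ M] (ρ : Representation ℤ G M)
    (hfaith : Function.Injective ρ) (hhom : Homogeneous ρ)
    (hH2 : ∀ C : Subgroup G, Nat.card C = p →
      Nontrivial (groupCohomology.H2 (Rep.of (ρ.comp C.subtype)))) :
    ∀ g : G, g = 1 := by
  have := Fact.mk hp
  by_contra! ⟨g, hg⟩
  have : Nontrivial G := nontrivial_of_ne g 1 hg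
  obtain ⟨c, hc, hcp⟩ := hpG.exists_mem_center_orderOf_eq
  obtain ⟨x, hx, hcx⟩ : ∃ x : M, x ≠ 0 ∧ ρ c x = x := by
    by_contra! h
    have := hH2 (Subgroup.zpowers c) (by rw [Nat.card_zpowers, hcp])
    exact not_subsingleton _ <| groupCohomology.subsingleton_H2_zpowers ρ c fun x hcx =>
      by_contra fun hx => h x hx hcx
  have hcV : extScalars ℚ ρ c = 1 := by
    refine hhom.extScalars_eq_one hp.ne_zero hc (hcp ▸ pow_orderOf_eq_one c) (v := 1 ⊗ₜ x)
      ((Module.Flat.tensorProduct_mk_injective ℤ M ℚ).ne_iff' (map_zero _) |>.2 hx) ?_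
    rw [show extScalars ℚ ρ c = (ρ c).baseChange ℚ from rfl, LinearMap.baseChange_tmul, hcx]
  have hc1 : c = 1 := extScalars_injective ℚ hfaith (by rw [hcV, map_one])
  exact hp.ne_one (by rw [← hcp, hc1, orderOf_one])
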